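/- arXiv:0811.1384 — 3 statements merged into one kernel-verified Lean document; each statement's English description precedes it below -/
import Mathlib

section
/- (Fiberwise form of the lemma that the induced pairing P is (−1)^w-symmetric.) With the fiberwise data of a twistor-TERP structure as in the context (integer w; complex vector spaces A, B, C, D; maps κ₁, κ₂, κ₃, κ₄ with κ₁∘κ₃ = id_A, κ₃∘κ₁ = id_C, κ₂∘κ₄ = id_B, κ₄∘κ₂ = id_D; maps S₁, S₂, S₃, S₄ satisfying the (−1)^w-symmetry identities conj(S₄ d a) = (−1)^w · S₁ a d and conj(S₃ c b) = (−1)^w · S₂ b c, and the compatibility identities conj(S₃ c b) = S₁ (κ₁ c) (κ₄ b) and conj(S₄ d a) = S₂ (κ₂ d) (κ₃ a)), define P₁ a b = i^w · S₁ a (κ₄ b), P₂ b a = i^w · S₂ b (κ₃ a), P₃ c d = i^w · S₃ c (κ₂ d), P₄ d c = i^w · S₄ d (κ₁ c). Then P is (−1)^w-symmetric: P₂ b a = (−1)^w · P₁ a b for all a ∈ A, b ∈ B, and P₄ d c = (−1)^w · P₃ c d for all c ∈ C, d ∈ D. -/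
/-!
Both symmetries come from the single symmetry `conj (S₄ d a) = (-1)^w S₁ a d`, transported
through κ by the compatibility identities: with `d = κ₄ b` it gives `S₂ b (κ₃ a) = (-1)^w S₁ a (κ₄ b)`
directly, while with `a = κ₁ c` it gives `conj (S₄ d (κ₁ c)) = (-1)^w conj (S₃ c (κ₂ d))`,
which may be conjugated back since `(-1)^w` is real.
-/

open Complex

theorem eq_mul_of_star_eq_mul_star {R : Type*} [CommSemiring R] [StarRing R] {r x y : R}
    (hr : IsSelfAdjoint r) (h : star x = r * star y) : x = r * y := by
  simpa [hr.star_eq, mul_comm] using congrArg star h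

theorem isSelfAdjoint_neg_one_zpow {R : Type*} [DivisionRing R] [StarRing R] (n : ℤ) :
    IsSelfAdjoint ((-1 : R) ^ n) :=
  (IsSelfAdjoint.one R).neg.zpow₀ n

theorem induced_pairing_P_symmetric_general (w : ℤ)
    {A B C D : Type*}
    -- the real structure κ
    (κ₁ : C → A) (κ₂ : D → B) (κ₃ : A → C) (κ₄ : B → D)
    (hκ₂₄ : ∀ b, κ₂ (κ₄ b) = b) (hκ₄₂ : ∀ d, κ₄ (κ₂ d) = d)
    -- the pairing 𝒮 of weight w
    (S₁ : A → D → ℂ) (S₂ : B → C → ℂ) (S₃ : C → B → ℂ) (S₄ : D → A → ℂ)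
    -- (−1)^w-symmetry of 𝒮
    (hSsym₁ : ∀ a d, (starRingEnd ℂ) (S₄ d a) = (-1 : ℂ) ^ w * S₁ a d)
    -- compatibility of 𝒮 and κ
    (hSκ₁ : ∀ c b, (starRingEnd ℂ) (S₃ c b) = S₁ (κ₁ c) (κ₄ b))
    (hSκ₂ : ∀ d a, (starRingEnd ℂ) (S₄ d a) = S₂ (κ₂ d) (κ₃ a))
    -- the induced pairing P = i^w · 𝒮 ∘ (1 ⊗ σ*κ)
    (P₁ : A → B → ℂ) (P₂ : B → A → ℂ) (P₃ : C → D → ℂ) (P₄ : D → C → ℂ)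
    (hP₁ : ∀ a b, P₁ a b = Complex.I ^ w * S₁ a (κ₄ b))
    (hP₂ : ∀ b a, P₂ b a = Complex.I ^ w * S₂ b (κ₃ a))
    (hP₃ : ∀ c d, P₃ c d = Complex.I ^ w * S₃ c (κ₂ d))
    (hP₄ : ∀ d c, P₄ d c = Complex.I ^ w * S₄ d (κ₁ c)) :
    (∀ (a : A) (b : B), P₂ b a = (-1 : ℂ) ^ w * P₁ a b) ∧
    (∀ (c : C) (d : D), P₄ d c = (-1 : ℂ) ^ w * P₃ c d) := by
  constructor
  · intro a b
    have hS : S₂ b (κ₃ a) = (-1 : ℂ) ^ w * S₁ a (κ₄ b) := by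
      rw [← hSsym₁, hSκ₂, hκ₂₄]
    rw [hP₂, hP₁, hS, mul_left_comm]
  · intro c d
    have hS : S₄ d (κ₁ c) = (-1 : ℂ) ^ w * S₃ c (κ₂ d) :=
      eq_mul_of_star_eq_mul_star (isSelfAdjoint_neg_one_zpow w) <| by
        rw [star_def, hSsym₁, hSκ₁, hκ₄₂]
    rw [hP₄, hP₃, hS, mul_left_comm]

/-- fiberwise form of the lemma that the pairing
P = i^w · 𝒮 ∘ (1 ⊗ σ*κ) induced by a twistor-TERP structure is
(−1)^w-symmetric. -/
theorem induced_pairing_P_symmetric (w : ℤ)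
    {A B C D : Type*}
    [AddCommGroup A] [Module ℂ A] [AddCommGroup B] [Module ℂ B]
    [AddCommGroup C] [Module ℂ C] [AddCommGroup D] [Module ℂ D]
    -- the real structure κ
    (κ₁ : C → A) (κ₂ : D → B) (κ₃ : A → C) (κ₄ : B → D)
    (hκ₁₃ : ∀ a, κ₁ (κ₃ a) = a) (hκ₃₁ : ∀ c, κ₃ (κ₁ c) = c)
    (hκ₂₄ : ∀ b, κ₂ (κ₄ b) = b) (hκ₄₂ : ∀ d, κ₄ (κ₂ d) = d)
    -- the pairing 𝒮 of weight w
    (S₁ : A → D → ℂ) (S₂ : B → C → ℂ) (S₃ : C → B → ℂ) (S₄ : D → A → ℂ)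
    -- (−1)^w-symmetry of 𝒮
    (hSsym₁ : ∀ a d, (starRingEnd ℂ) (S₄ d a) = (-1 : ℂ) ^ w * S₁ a d)
    (hSsym₂ : ∀ b c, (starRingEnd ℂ) (S₃ c b) = (-1 : ℂ) ^ w * S₂ b c)
    -- compatibility of 𝒮 and κ
    (hSκ₁ : ∀ c b, (starRingEnd ℂ) (S₃ c b) = S₁ (κ₁ c) (κ₄ b))
    (hSκ₂ : ∀ d a, (starRingEnd ℂ) (S₄ d a) = S₂ (κ₂ d) (κ₃ a))
    -- the induced pairing P = i^w · 𝒮 ∘ (1 ⊗ σ*κ)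
    (P₁ : A → B → ℂ) (P₂ : B → A → ℂ) (P₃ : C → D → ℂ) (P₄ : D → C → ℂ)
    (hP₁ : ∀ a b, P₁ a b = Complex.I ^ w * S₁ a (κ₄ b))
    (hP₂ : ∀ b a, P₂ b a = Complex.I ^ w * S₂ b (κ₃ a))
    (hP₃ : ∀ c d, P₃ c d = Complex.I ^ w * S₃ c (κ₂ d))
    (hP₄ : ∀ d c, P₄ d c = Complex.I ^ w * S₄ d (κ₁ c)) :
    (∀ (a : A) (b : B), P₂ b a = (-1 : ℂ) ^ w * P₁ a b) ∧
    (∀ (c : C) (d : D), P₄ d c = (-1 : ℂ) ^ w * P₃ c d) :=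
  induced_pairing_P_symmetric_general w κ₁ κ₂ κ₃ κ₄ hκ₂₄ hκ₄₂ S₁ S₂ S₃ S₄ hSsym₁ hSκ₁ hSκ₂ P₁ P₂ P₃
    P₄ hP₁ hP₂ hP₃ hP₄
end

section
/- (Fiberwise form of the lemma that P is compatible with the real structure κ.) With the fiberwise data of a twistor-TERP structure as in the context (integer w; complex vector spaces A, B, C, D; maps κ₁, κ₂, κ₃, κ₄ with κ₁∘κ₃ = id_A, κ₃∘κ₁ = id_C, κ₂∘κ₄ = id_B, κ₄∘κ₂ = id_D; maps S₁, S₂, S₃, S₄ satisfying the (−1)^w-symmetry identities conj(S₄ d a) = (−1)^w · S₁ a d and conj(S₃ c b) = (−1)^w · S₂ b c, and the compatibility identities conj(S₃ c b) = S₁ (κ₁ c) (κ₄ b) and conj(S₄ d a) = S₂ (κ₂ d) (κ₃ a)), define P₁ a b = i^w · S₁ a (κ₄ b), P₂ b a = i^w · S₂ b (κ₃ a), P₃ c d = i^w · S₃ c (κ₂ d), P₄ d c = i^w · S₄ d (κ₁ c). Then (−1)^w · P₁ (κ₁ c) (κ₂ d) = conj(P₃ c d) for all c ∈ C, d ∈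 D, and (−1)^w · P₂ (κ₂ d) (κ₁ c) = conj(P₄ d c) for all c ∈ C, d ∈ D. -/
/-!
Conjugating `i ^ w` produces exactly the sign `(-1) ^ w`, so each identity is the compatibility
of `𝒮` with `κ`, evaluated at `(c, κ₂ d)` resp. `(d, κ₁ c)`, multiplied by `i ^ w`.
-/

open Complex ComplexConjugate

lemma Complex.conj_I_zpow (w : ℤ) : conj (I ^ w) = (-1) ^ w * I ^ w := by
  rw [map_zpow₀, conj_I, ← mul_zpow]
  norm_num

lemma Complex.neg_one_zpow_mul_I_zpow_mul_of_conj_eq {s t : ℂ} (h : conj s = t) (w : ℤ) :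
    (-1) ^ w * (I ^ w * t) = conj (I ^ w * s) := by
  rw [map_mul, conj_I_zpow, h, mul_assoc]

theorem induced_pairing_P_compatible_with_kappa_general (w : ℤ)
    {A B C D : Type*}
    -- the real structure κ
    (κ₁ : C → A) (κ₂ : D → B) (κ₃ : A → C) (κ₄ : B → D)
    -- the pairing 𝒮 of weight w
    (S₁ : A → D → ℂ) (S₂ : B → C → ℂ) (S₃ : C → B → ℂ) (S₄ : D → A → ℂ)
    -- compatibility of 𝒮 and κ
    (hSκ₁ : ∀ c b, (starRingEnd ℂ) (S₃ c b) = S₁ (κ₁ c) (κ₄ b))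
    (hSκ₂ : ∀ d a, (starRingEnd ℂ) (S₄ d a) = S₂ (κ₂ d) (κ₃ a))
    -- the induced pairing P = i^w · 𝒮 ∘ (1 ⊗ σ*κ)
    (P₁ : A → B → ℂ) (P₂ : B → A → ℂ) (P₃ : C → D → ℂ) (P₄ : D → C → ℂ)
    (hP₁ : ∀ a b, P₁ a b = Complex.I ^ w * S₁ a (κ₄ b))
    (hP₂ : ∀ b a, P₂ b a = Complex.I ^ w * S₂ b (κ₃ a))
    (hP₃ : ∀ c d, P₃ c d = Complex.I ^ w * S₃ c (κ₂ d))
    (hP₄ : ∀ d c, P₄ d c = Complex.I ^ w * S₄ d (κ₁ c)) :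
    (∀ (c : C) (d : D), (-1 : ℂ) ^ w * P₁ (κ₁ c) (κ₂ d) = (starRingEnd ℂ) (P₃ c d)) ∧
    (∀ (c : C) (d : D), (-1 : ℂ) ^ w * P₂ (κ₂ d) (κ₁ c) = (starRingEnd ℂ) (P₄ d c)) := by
  refine ⟨fun c d => ?_, fun c d => ?_⟩
  · rw [hP₁, hP₃]
    exact neg_one_zpow_mul_I_zpow_mul_of_conj_eq (hSκ₁ c (κ₂ d)) w
  · rw [hP₂, hP₄]
    exact neg_one_zpow_mul_I_zpow_mul_of_conj_eq (hSκ₂ d (κ₁ c)) w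

/-- fiberwise form of the lemma that the pairing
P = i^w · 𝒮 ∘ (1 ⊗ σ*κ) induced by a twistor-TERP structure is compatible
with the real structure κ: (−1)^w · P ∘ (κ ⊗ j*κ) = κ_{𝕋(−w)} ∘ γ*P. -/
theorem induced_pairing_P_compatible_with_kappa (w : ℤ)
    {A B C D : Type*}
    [AddCommGroup A] [Module ℂ A] [AddCommGroup B] [Module ℂ B]
    [AddCommGroup C] [Module ℂ C] [AddCommGroup D] [Module ℂ D]
    -- the real structure κ
    (κ₁ : C → A) (κ₂ : D → B) (κ₃ : A → C) (κ₄ : B → D)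
    (hκ₁₃ : ∀ a, κ₁ (κ₃ a) = a) (hκ₃₁ : ∀ c, κ₃ (κ₁ c) = c)
    (hκ₂₄ : ∀ b, κ₂ (κ₄ b) = b) (hκ₄₂ : ∀ d, κ₄ (κ₂ d) = d)
    -- the pairing 𝒮 of weight w
    (S₁ : A → D → ℂ) (S₂ : B → C → ℂ) (S₃ : C → B → ℂ) (S₄ : D → A → ℂ)
    -- (−1)^w-symmetry of 𝒮
    (hSsym₁ : ∀ a d, (starRingEnd ℂ) (S₄ d a) = (-1 : ℂ) ^ w * S₁ a d)
    (hSsym₂ : ∀ b c, (starRingEnd ℂ) (S₃ c b) = (-1 : ℂ) ^ w * S₂ b c)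
    -- compatibility of 𝒮 and κ
    (hSκ₁ : ∀ c b, (starRingEnd ℂ) (S₃ c b) = S₁ (κ₁ c) (κ₄ b))
    (hSκ₂ : ∀ d a, (starRingEnd ℂ) (S₄ d a) = S₂ (κ₂ d) (κ₃ a))
    -- the induced pairing P = i^w · 𝒮 ∘ (1 ⊗ σ*κ)
    (P₁ : A → B → ℂ) (P₂ : B → A → ℂ) (P₃ : C → D → ℂ) (P₄ : D → C → ℂ)
    (hP₁ : ∀ a b, P₁ a b = Complex.I ^ w * S₁ a (κ₄ b))
    (hP₂ : ∀ b a, P₂ b a = Complex.I ^ w * S₂ b (κ₃ a))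
    (hP₃ : ∀ c d, P₃ c d = Complex.I ^ w * S₃ c (κ₂ d))
    (hP₄ : ∀ d c, P₄ d c = Complex.I ^ w * S₄ d (κ₁ c)) :
    (∀ (c : C) (d : D), (-1 : ℂ) ^ w * P₁ (κ₁ c) (κ₂ d) = (starRingEnd ℂ) (P₃ c d)) ∧
    (∀ (c : C) (d : D), (-1 : ℂ) ^ w * P₂ (κ₂ d) (κ₁ c) = (starRingEnd ℂ) (P₄ d c)) :=
  induced_pairing_P_compatible_with_kappa_general w κ₁ κ₂ κ₃ κ₄ S₁ S₂ S₃ S₄ hSκ₁ hSκ₂ P₁ P₂ P₃ P₄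
    hP₁ hP₂ hP₃ hP₄
end

section
/- (Converse construction: the pairing 𝒮 built from P and κ is (−1)^w-symmetric and compatible with κ.) With the fiberwise data as in the context, suppose the maps P₁ : A → B → ℂ, P₂ : B → A → ℂ, P₃ : C → D → ℂ, P₄ : D → C → ℂ satisfy the (−1)^w-symmetry identities P₂ b a = (−1)^w · P₁ a b and P₄ d c = (−1)^w · P₃ c d, together with the reality identities (−1)^w · P₁ (κ₁ c) (κ₂ d) = conj(P₃ c d) and (−1)^w · P₂ (κ₂ d) (κ₁ c) = conj(P₄ d c). Define S₁ a d = i^{−w} · P₁ a (κ₂ d), S₂ b c = i^{−w} · P₂ b (κ₁ c), S₃ c b = i^{−w} · P₃ c (κ₄ b), S₄ d a = i^{−w} · P₄ d (κ₃ a). Then S satisfies the (−1)^w-symmetry identities conj(S₄ d a) = (−1)^w · S₁ a d and conj(S₃ c b) = (−1)^w · S₂ b c, and the compatibility identities conj(S₃ c b) = S₁ (κ₁ c) (κ₄ b) and conj(S₄ d a) = S₂ (κ₂ d) (κ₃ a), for all a ∈ A, b ∈ B, c ∈ C, d ∈ D. -/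
/-! Conjugation turns `i^{-w}` into `(-1)^w i^{-w}`, and this sign cancels the `(-1)^w` in the
reality condition on `P`; that is the compatibility of `𝒮` with `κ`. The `(-1)^w`-symmetry of `𝒮`
then follows from compatibility and the symmetry of `P`. -/

open Complex ComplexConjugate

lemma neg_one_zpow_mul_self {α : Type*} [DivisionMonoid α] [HasDistribNeg α] (n : ℤ) :
    (-1 : α) ^ n * (-1 : α) ^ n = 1 := by
  rw [← (Commute.refl (-1 : α)).mul_zpow, neg_mul_neg, one_mul, one_zpow]

lemma conj_I_zpow_neg (w : ℤ) : conj (I ^ (-w)) = (-1 : ℂ) ^ w * I ^ (-w) := by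
  rw [map_zpow₀, conj_I, neg_eq_neg_one_mul, mul_zpow, zpow_neg (-1 : ℂ), ← inv_zpow,
    inv_neg_one]

lemma conj_I_zpow_neg_mul {w : ℤ} {p q : ℂ} (h : (-1 : ℂ) ^ w * p = conj q) :
    conj (I ^ (-w) * q) = I ^ (-w) * p := by
  rw [map_mul, conj_I_zpow_neg, ← h, mul_left_comm, ← mul_assoc, ← mul_assoc,
    neg_one_zpow_mul_self, one_mul]

theorem pairing_S_from_P_symmetric_and_compatible_general (w : ℤ)
    {A B C D : Type*}
    -- the real structure κ
    (κ₁ : C → A) (κ₂ : D → B) (κ₃ : A → C) (κ₄ : B → D)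
    (hκ₁₃ : ∀ a, κ₁ (κ₃ a) = a)
    (hκ₂₄ : ∀ b, κ₂ (κ₄ b) = b)
    -- the pairing P
    (P₁ : A → B → ℂ) (P₂ : B → A → ℂ) (P₃ : C → D → ℂ) (P₄ : D → C → ℂ)
    -- (−1)^w-symmetry of P
    (hPsym₁ : ∀ (a : A) (b : B), P₂ b a = (-1 : ℂ) ^ w * P₁ a b)
    -- reality of P
    (hPreal₁ : ∀ (c : C) (d : D),
      (-1 : ℂ) ^ w * P₁ (κ₁ c) (κ₂ d) = (starRingEnd ℂ) (P₃ c d))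
    (hPreal₂ : ∀ (c : C) (d : D),
      (-1 : ℂ) ^ w * P₂ (κ₂ d) (κ₁ c) = (starRingEnd ℂ) (P₄ d c))
    -- the pairing 𝒮 recovered from P and κ
    (S₁ : A → D → ℂ) (S₂ : B → C → ℂ) (S₃ : C → B → ℂ) (S₄ : D → A → ℂ)
    (hS₁ : ∀ a d, S₁ a d = Complex.I ^ (-w) * P₁ a (κ₂ d))
    (hS₂ : ∀ b c, S₂ b c = Complex.I ^ (-w) * P₂ b (κ₁ c))
    (hS₃ : ∀ c b, S₃ c b = Complex.I ^ (-w) * P₃ c (κ₄ b))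
    (hS₄ : ∀ d a, S₄ d a = Complex.I ^ (-w) * P₄ d (κ₃ a)) :
    -- (−1)^w-symmetry of 𝒮
    (∀ (a : A) (d : D), (starRingEnd ℂ) (S₄ d a) = (-1 : ℂ) ^ w * S₁ a d) ∧
    (∀ (b : B) (c : C), (starRingEnd ℂ) (S₃ c b) = (-1 : ℂ) ^ w * S₂ b c) ∧
    -- compatibility of 𝒮 and κ
    (∀ (c : C) (b : B), (starRingEnd ℂ) (S₃ c b) = S₁ (κ₁ c) (κ₄ b)) ∧
    (∀ (d : D) (a : A), (starRingEnd ℂ) (S₄ d a) = S₂ (κ₂ d) (κ₃ a)) := by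
  have compat₃ : ∀ c b, conj (S₃ c b) = S₁ (κ₁ c) (κ₄ b) := fun c b => by
    rw [hS₃, hS₁]
    exact conj_I_zpow_neg_mul (hPreal₁ c (κ₄ b))
  have compat₄ : ∀ d a, conj (S₄ d a) = S₂ (κ₂ d) (κ₃ a) := fun d a => by
    rw [hS₄, hS₂]
    exact conj_I_zpow_neg_mul (hPreal₂ (κ₃ a) d)
  refine ⟨fun a d => ?_, fun b c => ?_, compat₃, compat₄⟩
  · rw [compat₄, hS₂, hκ₁₃, hPsym₁, hS₁, mul_left_comm]
  · rw [compat₃, hS₁, hκ₂₄, hS₂, hPsym₁, mul_left_comm ((-1 : ℂ) ^ w),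
      ← mul_assoc ((-1 : ℂ) ^ w), neg_one_zpow_mul_self, one_mul]

/-- converse construction. The pairing 𝒮 built from the pairing P
and the real structure κ via S = i^{−w} · P ∘ (1 ⊗ j*κ⁻¹) (fiberwise
S₁ a d = i^{−w}·P₁ a (κ₂ d), etc.) is (−1)^w-symmetric and compatible with κ. -/
theorem pairing_S_from_P_symmetric_and_compatible (w : ℤ)
    {A B C D : Type*}
    [AddCommGroup A] [Module ℂ A] [AddCommGroup B] [Module ℂ B]
    [AddCommGroup C] [Module ℂ C] [AddCommGroup D] [Module ℂ D]
    -- the real structure κ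
    (κ₁ : C → A) (κ₂ : D → B) (κ₃ : A → C) (κ₄ : B → D)
    (hκ₁₃ : ∀ a, κ₁ (κ₃ a) = a) (hκ₃₁ : ∀ c, κ₃ (κ₁ c) = c)
    (hκ₂₄ : ∀ b, κ₂ (κ₄ b) = b) (hκ₄₂ : ∀ d, κ₄ (κ₂ d) = d)
    -- the pairing P
    (P₁ : A → B → ℂ) (P₂ : B → A → ℂ) (P₃ : C → D → ℂ) (P₄ : D → C → ℂ)
    -- (−1)^w-symmetry of P
    (hPsym₁ : ∀ (a : A) (b : B), P₂ b a = (-1 : ℂ) ^ w * P₁ a b)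
    (hPsym₂ : ∀ (c : C) (d : D), P₄ d c = (-1 : ℂ) ^ w * P₃ c d)
    -- reality of P
    (hPreal₁ : ∀ (c : C) (d : D),
      (-1 : ℂ) ^ w * P₁ (κ₁ c) (κ₂ d) = (starRingEnd ℂ) (P₃ c d))
    (hPreal₂ : ∀ (c : C) (d : D),
      (-1 : ℂ) ^ w * P₂ (κ₂ d) (κ₁ c) = (starRingEnd ℂ) (P₄ d c))
    -- the pairing 𝒮 recovered from P and κ
    (S₁ : A → D → ℂ) (S₂ : B → C → ℂ) (S₃ : C → B → ℂ) (S₄ : D → A → ℂ)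
    (hS₁ : ∀ a d, S₁ a d = Complex.I ^ (-w) * P₁ a (κ₂ d))
    (hS₂ : ∀ b c, S₂ b c = Complex.I ^ (-w) * P₂ b (κ₁ c))
    (hS₃ : ∀ c b, S₃ c b = Complex.I ^ (-w) * P₃ c (κ₄ b))
    (hS₄ : ∀ d a, S₄ d a = Complex.I ^ (-w) * P₄ d (κ₃ a)) :
    -- (−1)^w-symmetry of 𝒮
    (∀ (a : A) (d : D), (starRingEnd ℂ) (S₄ d a) = (-1 : ℂ) ^ w * S₁ a d) ∧
    (∀ (b : B) (c : C), (starRingEnd ℂ) (S₃ c b) = (-1 : ℂ) ^ w * S₂ b c) ∧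
    -- compatibility of 𝒮 and κ
    (∀ (c : C) (b : B), (starRingEnd ℂ) (S₃ c b) = S₁ (κ₁ c) (κ₄ b)) ∧
    (∀ (d : D) (a : A), (starRingEnd ℂ) (S₄ d a) = S₂ (κ₂ d) (κ₃ a)) :=
  pairing_S_from_P_symmetric_and_compatible_general w κ₁ κ₂ κ₃ κ₄ hκ₁₃ hκ₂₄ P₁ P₂ P₃ P₄ hPsym₁
    hPreal₁ hPreal₂ S₁ S₂ S₃ S₄ hS₁ hS₂ hS₃ hS₄
end
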